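/- Let H be an m × n matrix over GF(2) of full row rank m, let 0 ≤ p < τ < 1/2, and let W be a random vector in (ZMod 2)^n whose n coordinates are i.i.d. Bernoulli(p). Let ŵ : (ZMod 2)^m → (ZMod 2)^n be any function assigning to each syndrome q a minimum-Hamming-weight element of the coset {w : Hw = q}. Then the false rejection probability of the threshold decoder satisfies Pr[wt(ŵ(HW)) > τn] ≤ 2^{-n·D(τ‖p)} + Pr[ŵ(HW) ≠ W], where D(τ‖p) := τ log₂(τ/p) + (1−τ) log₂((1−τ)/(1−p)). In particular, Pr[wt(W) > τn] ≤ 2^{-n·D(τ‖p)}. -/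

import Mathlib

open Classical in
/-- Probability of the event `P` for a random word in `(ZMod 2)^n` whose `n` coordinates are
i.i.d. Bernoulli(`p`): each word `w` has probability `p^{wt(w)} (1-p)^{n - wt(w)}`. -/
noncomputable def bernProb (n : ℕ) (p : ℝ) (P : (Fin n → ZMod 2) → Prop) : ℝ :=
  ∑ w : Fin n → ZMod 2,
    if P w then p ^ hammingNorm w * (1 - p) ^ (n - hammingNorm w) else 0

/-- The binary Kullback–Leibler divergence
`D(τ‖p) = τ log₂(τ/p) + (1-τ) log₂((1-τ)/(1-p))`. -/
noncomputable def klBern (τ p : ℝ) : ℝ :=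
  τ * Real.logb 2 (τ / p) + (1 - τ) * Real.logb 2 ((1 - τ) / (1 - p))

/-! If `ŵ(HW) = W` the two weights agree, so the first bound is a union bound over the events
`wt(W) > τn` and `ŵ(HW) ≠ W`.  The Chernoff bound is exponential tilting: on a word of weight
`k > τn` the Bernoulli(`p`) probability is at most `2^{-n D(τ‖p)}` times the Bernoulli(`τ`)
probability, and the Bernoulli(`τ`) probabilities sum to `1`. -/

open Finset

lemma prod_ite_ne_zero_eq_pow_hammingNorm {ι M : Type*} [Fintype ι] [CommMonoid M]
    {β : ι → Type*} [∀ i, DecidableEq (β i)] [∀ i, Zero (β i)] (a b : M) (x : ∀ i, β i) :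
    ∏ i, (if x i ≠ 0 then a else b)
      = a ^ hammingNorm x * b ^ (Fintype.card ι - hammingNorm x) := by
  have hcard := card_filter_add_card_filter_not (s := univ) (fun i => x i ≠ 0)
  rw [prod_ite, prod_const, prod_const, hammingNorm, ← card_univ]
  congr 2
  omega

lemma sum_pow_hammingNorm_mul_one_sub_pow_eq_one {ι : Type*} [Fintype ι] [DecidableEq ι]
    (τ : ℝ) :
    ∑ x : ι → ZMod 2, τ ^ hammingNorm x * (1 - τ) ^ (Fintype.card ι - hammingNorm x) = 1 := by
  simp_rw [← prod_ite_ne_zero_eq_pow_hammingNorm,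
    ← Fintype.prod_sum fun _ (y : ZMod 2) => if y ≠ 0 then τ else 1 - τ]
  have hsum : ∑ y : ZMod 2, (if y ≠ 0 then τ else 1 - τ) = 1 := by
    rw [show (univ : Finset (ZMod 2)) = {0, 1} from rfl, sum_pair zero_ne_one]
    simp
  simp only [hsum, prod_const_one]

lemma two_rpow_neg_mul_klBern {p τ : ℝ} (hp : 0 < p) (hp1 : p < 1) (hτ : 0 < τ) (hτ1 : τ < 1)
    (x : ℝ) :
    (2 : ℝ) ^ (-(x * klBern τ p)) = (p / τ) ^ (τ * x) * ((1 - p) / (1 - τ)) ^ (x - τ * x) := by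
  have hexp : -(x * klBern τ p)
      = Real.logb 2 (p / τ) * (τ * x) + Real.logb 2 ((1 - p) / (1 - τ)) * (x - τ * x) := by
    rw [klBern, ← inv_div τ, ← inv_div (1 - τ), Real.logb_inv, Real.logb_inv]
    ring
  rw [hexp, Real.rpow_add two_pos, Real.rpow_mul zero_le_two, Real.rpow_mul zero_le_two,
    Real.rpow_logb two_pos one_lt_two.ne' (by positivity),
    Real.rpow_logb two_pos one_lt_two.ne' (div_pos (by linarith) (by linarith))]

lemma rpow_mul_rpow_sub_le {a b : ℝ} (ha : 0 < a) (hab : a ≤ b) {s t : ℝ} (hst : s ≤ t) (u : ℝ) :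
    a ^ t * b ^ (u - t) ≤ a ^ s * b ^ (u - s) := by
  have hb : 0 < b := ha.trans_le hab
  calc a ^ t * b ^ (u - t) = a ^ s * a ^ (t - s) * b ^ (u - t) := by
        rw [← Real.rpow_add ha, add_sub_cancel]
    _ ≤ a ^ s * b ^ (t - s) * b ^ (u - t) := by gcongr
    _ = a ^ s * b ^ (u - s) := by
        rw [mul_assoc, ← Real.rpow_add hb, sub_add_sub_cancel']

lemma pow_mul_one_sub_pow_le_two_rpow_klBern_mul {p τ : ℝ} (hp : 0 ≤ p) (hpτ : p ≤ τ)
    (hτ1 : τ < 1) {n k : ℕ} (hkn : k ≤ n) (hk : τ * n < k) :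
    p ^ k * (1 - p) ^ (n - k)
      ≤ (2 : ℝ) ^ (-(n * klBern τ p)) * (τ ^ k * (1 - τ) ^ (n - k)) := by
  rcases hp.eq_or_lt with rfl | hp
  · have hk0 : 0 < k := Nat.cast_pos.mp ((mul_nonneg hpτ n.cast_nonneg).trans_lt hk)
    have : 0 ≤ 1 - τ := by linarith
    simp only [zero_pow hk0.ne', zero_mul]
    positivity
  have hτ : 0 < τ := hp.trans_le hpτ
  set a := p / τ
  set b := (1 - p) / (1 - τ)
  have h1τ : 0 < 1 - τ := by linarith
  have hab : a ≤ b := by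
    rw [div_le_div_iff₀ hτ h1τ]
    nlinarith
  have hratio : p ^ k * (1 - p) ^ (n - k)
      = a ^ (k : ℝ) * b ^ ((n : ℝ) - k) * (τ ^ k * (1 - τ) ^ (n - k)) := by
    rw [← Nat.cast_sub hkn, Real.rpow_natCast, Real.rpow_natCast, div_pow, div_pow]
    field_simp
  rw [hratio, two_rpow_neg_mul_klBern hp (by linarith) hτ hτ1]
  exact mul_le_mul_of_nonneg_right (rpow_mul_rpow_sub_le (by positivity) hab hk.le _)
    (by positivity)

lemma bernProb_hammingNorm_gt_le (n : ℕ) {p τ : ℝ} (hp : 0 ≤ p) (hpτ : p ≤ τ) (hτ1 : τ < 1) :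
    bernProb n p (fun w => (hammingNorm w : ℝ) > τ * n) ≤ (2 : ℝ) ^ (-(n * klBern τ p)) := by
  have hτ : 0 ≤ τ := hp.trans hpτ
  have h1τ : 0 ≤ 1 - τ := by linarith
  calc bernProb n p (fun w => (hammingNorm w : ℝ) > τ * n)
      ≤ ∑ w : Fin n → ZMod 2,
          (2 : ℝ) ^ (-(n * klBern τ p)) * (τ ^ hammingNorm w * (1 - τ) ^ (n - hammingNorm w)) := by
        unfold bernProb
        gcongr with w
        split_ifs with hw
        · exact pow_mul_one_sub_pow_le_two_rpow_klBern_mul hp hpτ hτ1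
            (hammingNorm_le_card_fintype.trans_eq (Fintype.card_fin n)) hw
        · positivity
    _ = (2 : ℝ) ^ (-(n * klBern τ p)) := by
        have hsum := sum_pow_hammingNorm_mul_one_sub_pow_eq_one (ι := Fin n) τ
        rw [Fintype.card_fin] at hsum
        rw [← mul_sum, hsum, mul_one]

lemma bernProb_le_add {n : ℕ} {p : ℝ} (hp : 0 ≤ p) (hp1 : p ≤ 1)
    {A B C : (Fin n → ZMod 2) → Prop} (h : ∀ w, A w → B w ∨ C w) :
    bernProb n p A ≤ bernProb n p B + bernProb n p C := by
  rw [bernProb, bernProb, bernProb, ← sum_add_distrib]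
  gcongr with w
  have : 0 ≤ p ^ hammingNorm w * (1 - p) ^ (n - hammingNorm w) := by
    have : 0 ≤ 1 - p := by linarith
    positivity
  have := h w
  split_ifs <;> grind

theorem stmt_3_general (n m : ℕ) (H : Matrix (Fin m) (Fin n) (ZMod 2))
    (p τ : ℝ) (hp0 : 0 ≤ p) (hpτ : p < τ) (hτ : τ < 1 / 2)
    (wh : (Fin m → ZMod 2) → (Fin n → ZMod 2)) :
    bernProb n p (fun w => (hammingNorm (wh (H.mulVec w)) : ℝ) > τ * n)
        ≤ (2 : ℝ) ^ (-((n : ℝ) * klBern τ p)) + bernProb n p (fun w => wh (H.mulVec w) ≠ w)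
    ∧ bernProb n p (fun w => (hammingNorm w : ℝ) > τ * n)
        ≤ (2 : ℝ) ^ (-((n : ℝ) * klBern τ p)) := by
  have hW := bernProb_hammingNorm_gt_le n hp0 hpτ.le (by linarith)
  refine ⟨?_, hW⟩
  calc _ ≤ bernProb n p (fun w => (hammingNorm w : ℝ) > τ * n)
          + bernProb n p (fun w => wh (H.mulVec w) ≠ w) :=
        bernProb_le_add hp0 (by linarith) fun _ hw =>
          or_iff_not_imp_right.2 fun hdec => not_not.1 hdec ▸ hw
    _ ≤ _ := by gcongr

/-- false-rejection-rate bound.  Let `H` have full row rank,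
`0 ≤ p < τ < 1/2`, and let `W` have i.i.d. Bernoulli(`p`) coordinates.  If `ŵ` assigns to each
syndrome a minimum-weight element of the corresponding coset, then
`Pr[wt(ŵ(HW)) > τn] ≤ 2^{-n D(τ‖p)} + Pr[ŵ(HW) ≠ W]`, and in particular
`Pr[wt(W) > τn] ≤ 2^{-n D(τ‖p)}`. -/
theorem stmt_3 (n m : ℕ) (H : Matrix (Fin m) (Fin n) (ZMod 2))
    (hH : LinearIndependent (ZMod 2) (fun i => H i))
    (p τ : ℝ) (hp0 : 0 ≤ p) (hpτ : p < τ) (hτ : τ < 1 / 2)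
    (wh : (Fin m → ZMod 2) → (Fin n → ZMod 2))
    (hwhmem : ∀ q, H.mulVec (wh q) = q)
    (hwhmin : ∀ q w, H.mulVec w = q → hammingNorm (wh q) ≤ hammingNorm w) :
    bernProb n p (fun w => (hammingNorm (wh (H.mulVec w)) : ℝ) > τ * n)
        ≤ (2 : ℝ) ^ (-((n : ℝ) * klBern τ p)) + bernProb n p (fun w => wh (H.mulVec w) ≠ w)
    ∧ bernProb n p (fun w => (hammingNorm w : ℝ) > τ * n)
        ≤ (2 : ℝ) ^ (-((n : ℝ) * klBern τ p)) :=
  stmt_3_general n m H p τ hp0 hpτ hτ wh
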